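/- Let n₁, n₂ ≥ 2 and work in ℝ^{n₁+n₂} = ℝ^{n₁} × ℝ^{n₂}, with P¹ = ℝ^{n₁} × {0}, P² = {0} × ℝ^{n₂} and orthogonal projections p¹, p². Let x, y be unit vectors with |x∧y| = 1 and |p¹(x)∧p¹(y)| + |p²(x)∧p²(y)| = 1. If the 2-plane spanned by x and y is not contained in P¹, then |p²(x)∧p²(y)| > 0; in other words, the restriction of p² to span{x,y} is injective. -/

import Mathlib

open Set Metric MeasureTheory Filter Pointwise
open scoped ENNReal RealInnerProductSpace NNReal

noncomputable section

/-- `Euc n` is the Euclidean space `ℝⁿ`. -/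
abbrev Euc (n : ℕ) : Type := EuclideanSpace ℝ (Fin n)

variable {n : ℕ}

/-- A cone centered at `0`. -/
def IsCone0 (C : Set (Euc n)) : Prop :=
  (0 : Euc n) ∈ C ∧ ∀ t : ℝ, 0 < t → t • C = C

/-- `f` is (the time-one map of) a Lipschitz deformation in the set `U`. -/
def IsDeformationIn (U : Set (Euc n)) (f : Euc n → Euc n) : Prop :=
  ∃ φ : ℝ → Euc n → Euc n,
    (∀ x ∈ U, φ 0 x = x) ∧
    (∀ t ∈ Icc (0:ℝ) 1, MapsTo (φ t) U U) ∧
    ContinuousOn (fun p : ℝ × Euc n => φ p.1 p.2) (Icc (0:ℝ) 1 ×ˢ U) ∧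
    (∃ L : ℝ≥0, LipschitzOnWith L (φ 1) U) ∧
    (∀ x ∈ U, φ 1 x = f x) ∧
    closure (⋃ t ∈ Icc (0:ℝ) 1,
        ({x ∈ U | φ t x ≠ x} ∪ φ t '' {x ∈ U | φ t x ≠ x})) ⊆ U ∧
    IsCompact (closure (⋃ t ∈ Icc (0:ℝ) 1,
        ({x ∈ U | φ t x ≠ x} ∪ φ t '' {x ∈ U | φ t x ≠ x})))

/-- `E` is a `d`-dimensional Almgren minimal set in the open set `U`
(`E ⊆ U` relatively closed). -/
def IsAlmgrenMinimalIn (d : ℕ) (U E : Set (Euc n)) : Prop :=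
  E ⊆ U ∧ closure E ∩ U ⊆ E ∧
  (∀ (x : Euc n) (r : ℝ), closedBall x r ⊆ U → μH[(d:ℝ)] (E ∩ closedBall x r) < ⊤) ∧
  ∀ f : Euc n → Euc n, IsDeformationIn U f →
    μH[(d:ℝ)] (E \ f '' E) ≤ μH[(d:ℝ)] (f '' E \ E)

/-- A set is reduced if it has positive `H^d` measure in every ball centered on it. -/
def IsReducedSet (d : ℕ) (E : Set (Euc n)) : Prop :=
  ∀ x ∈ E, ∀ r : ℝ, 0 < r → 0 < μH[(d:ℝ)] (E ∩ ball x r)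

/-- A (reduced) `d`-dimensional Almgren minimal cone in `ℝⁿ`. -/
def IsAlmgrenMinimalCone (d : ℕ) (C : Set (Euc n)) : Prop :=
  IsClosed C ∧ IsCone0 C ∧ IsReducedSet d C ∧ IsAlmgrenMinimalIn d univ C

/-- The class `F(E,U)` of deformations of `E` in `U`. -/
def deformClass (U E : Set (Euc n)) : Set (Set (Euc n)) :=
  {F | ∃ f, IsDeformationIn U f ∧ F = (E \ U) ∪ f '' (E ∩ U)}

/-- Convergence in local Hausdorff distance on every compact set. -/
def LocHausTendsto (S : ℕ → Set (Euc n)) (F : Set (Euc n)) : Prop :=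
  ∀ K : Set (Euc n), IsCompact K →
    Tendsto (fun k => (⨆ y ∈ S k ∩ K, infDist y F) ⊔ (⨆ y ∈ F ∩ K, infDist y (S k)))
      atTop (nhds 0)

/-- The class `F̄(E,U)` of limits of deformations of `E` in `U`. -/
def limDeformClass (d : ℕ) (U E : Set (Euc n)) : Set (Set (Euc n)) :=
  {F | F ⊆ closure U ∧ IsClosed F ∧
    (∃ S : ℕ → Set (Euc n), (∀ k, S k ∈ deformClass U E) ∧ LocHausTendsto S F) ∧
    (∀ (x : Euc n) (r : ℝ), μH[(d:ℝ)] (F ∩ closedBall x r) < ⊤) ∧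
    μH[(d:ℝ)] ((F ∩ frontier U) \ E) = 0}

/-- `C` is Almgren unique in the domain `U`. -/
def AlmgrenUniqueIn (d : ℕ) (C U : Set (Euc n)) : Prop :=
  ∀ E ∈ limDeformClass d U C,
    μH[(d:ℝ)] E = (⨅ F ∈ limDeformClass d U C, μH[(d:ℝ)] F) → E = C ∩ closure U

/-- `C` is Almgren unique (in every domain). -/
def AlmgrenUnique (d : ℕ) (C : Set (Euc n)) : Prop :=
  ∀ U : Set (Euc n), IsOpen U → IsConnected U → AlmgrenUniqueIn d C U

/-- `F` is a `δ`-sliding deformation of `E` in `cl(U)`. -/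
def IsSlidingDeformation (δ : ℝ) (U E F : Set (Euc n)) : Prop :=
  ∃ φ : ℝ → Euc n → Euc n,
    (∀ x ∈ closure U, φ 0 x = x) ∧
    (∀ t ∈ Icc (0:ℝ) 1, MapsTo (φ t) (closure U) (closure U)) ∧
    ContinuousOn (fun p : ℝ × Euc n => φ p.1 p.2) (Icc (0:ℝ) 1 ×ˢ closure U) ∧
    (∃ L : ℝ≥0, LipschitzOnWith L (φ 1) (closure U)) ∧
    (∀ t ∈ Icc (0:ℝ) 1, MapsTo (φ t) (frontier U) (frontier U)) ∧
    (∀ t ∈ Icc (0:ℝ) 1, ∀ x ∈ E ∩ frontier U, ‖φ t x - x‖ < δ) ∧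
    F = φ 1 '' E

/-- The class `F̄_δ(E, cl U)` of limits of `δ`-sliding deformations of `E`. -/
def slidingLimClass (d : ℕ) (δ : ℝ) (U E : Set (Euc n)) : Set (Set (Euc n)) :=
  {F | F ⊆ closure U ∧ IsClosed F ∧
    (∃ S : ℕ → Set (Euc n), (∀ k, IsSlidingDeformation δ U E (S k)) ∧ LocHausTendsto S F) ∧
    (∀ (x : Euc n) (r : ℝ), μH[(d:ℝ)] (F ∩ closedBall x r) < ⊤) ∧
    μH[(d:ℝ)] ((F ∩ frontier U) \ E) = 0}

/-- `E` is `δ`-sliding minimal in `cl(U)`. -/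
def IsSlidingMinimal (d : ℕ) (δ : ℝ) (U E : Set (Euc n)) : Prop :=
  ∀ F ∈ slidingLimClass d δ U E, μH[(d:ℝ)] (E \ F) ≤ μH[(d:ℝ)] (F \ E)

/-- The trace of a cone on the unit sphere. -/
def spherePart (K : Set (Euc n)) : Set (Euc n) := K ∩ sphere (0 : Euc n) 1

/-- A point of `K ∩ ∂B(0,1)` at which the net `K ∩ ∂B(0,1)` is not locally
homeomorphic to an interval (a `Y` point of the net). -/
def IsYPoint (K : Set (Euc n)) (a : Euc n) : Prop :=
  a ∈ spherePart K ∧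
  ¬ ∃ W : Set (Euc n), IsOpen W ∧ a ∈ W ∧
      Nonempty ((spherePart K ∩ W : Set (Euc n)) ≃ₜ (Set.Ioo (0:ℝ) 1))

/-- The convex domain `U(K,η)` associated to a `2`-dimensional minimal cone `K`. -/
def UDomain (K : Set (Euc n)) (η : ℝ) : Set (Euc n) :=
  {x ∈ ball (0 : Euc n) 1 |
    (∀ y ∈ spherePart K, ⟪x, y⟫ < 1 - η) ∧
    (∀ a : Euc n, IsYPoint K a → ⟪x, a⟫ < 1 - 2 * η)}

/-- `K` is sliding stable: for some small `η` and some `δ > 0`, `K` is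
`δ`-sliding minimal in `cl(U(K,η))`. -/
def SlidingStable (d : ℕ) (K : Set (Euc n)) : Prop :=
  ∃ η δ : ℝ, 0 < η ∧ η < 1 / 100 ∧ 0 < δ ∧
    IsSlidingMinimal d δ (UDomain K η) (K ∩ closure (UDomain K η))

/-- The minimal angle between two cones: the largest `θ ∈ [0,π/2]` such that
`|⟨u,v⟩| ≤ cos θ‖u‖‖v‖` for all `u ∈ A`, `v ∈ B`. -/
def minAngle (A B : Set (Euc n)) : ℝ :=
  sSup {θ : ℝ | θ ∈ Icc 0 (Real.pi / 2) ∧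
    ∀ u ∈ A, ∀ v ∈ B, |⟪u, v⟫| ≤ Real.cos θ * (‖u‖ * ‖v‖)}

/-- `|x₁ ∧ ⋯ ∧ x_d|`: the `d`-volume of the parallelepiped spanned by `x₁,…,x_d`,
i.e. the square root of the Gram determinant. -/
def wedgeNorm {d : ℕ} (x : Fin d → Euc n) : ℝ :=
  Real.sqrt (Matrix.det (Matrix.of fun i j => ⟪x i, x j⟫))

/-- The isometric inclusion `ℝ^{n₁} → ℝ^{n₁} × {0} ⊆ ℝ^{n₁+n₂}`. -/
def pad1 (n₁ n₂ : ℕ) (x : Euc n₁) : Euc (n₁ + n₂) :=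
  (EuclideanSpace.equiv (Fin (n₁ + n₂)) ℝ).symm
    (fun i => if h : (i : ℕ) < n₁ then x ⟨i, h⟩ else 0)

/-- The isometric inclusion `ℝ^{n₂} → {0} × ℝ^{n₂} ⊆ ℝ^{n₁+n₂}`. -/
def pad2 (n₁ n₂ : ℕ) (x : Euc n₂) : Euc (n₁ + n₂) :=
  (EuclideanSpace.equiv (Fin (n₁ + n₂)) ℝ).symm
    (fun i => if _ : (i : ℕ) < n₁ then 0 else x ⟨(i : ℕ) - n₁, by omega⟩)

/-- The orthogonal union `E₁ ∪⊥ E₂ = (E₁ × {0}) ∪ ({0} × E₂) ⊆ ℝ^{n₁+n₂}`. -/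
def orthUnion (n₁ n₂ : ℕ) (E₁ : Set (Euc n₁)) (E₂ : Set (Euc n₂)) : Set (Euc (n₁ + n₂)) :=
  pad1 n₁ n₂ '' E₁ ∪ pad2 n₁ n₂ '' E₂

/-- The projection `ℝ^{n₁+n₂} → ℝ^{n₁}` on the first factor. -/
def proj1 (n₁ n₂ : ℕ) (x : Euc (n₁ + n₂)) : Euc n₁ :=
  (EuclideanSpace.equiv (Fin n₁) ℝ).symm fun i => x (Fin.castAdd n₂ i)

/-- The projection `ℝ^{n₁+n₂} → ℝ^{n₂}` on the second factor. -/
def proj2 (n₁ n₂ : ℕ) (x : Euc (n₁ + n₂)) : Euc n₂ :=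
  (EuclideanSpace.equiv (Fin n₂) ℝ).symm fun i => x (Fin.natAdd n₁ i)

/-- Orthogonal projection of `ℝ^{n₁+n₂}` onto `P¹ = ℝ^{n₁} × {0}`. -/
def projTo1 (n₁ n₂ : ℕ) (x : Euc (n₁ + n₂)) : Euc (n₁ + n₂) := pad1 n₁ n₂ (proj1 n₁ n₂ x)

/-- Orthogonal projection of `ℝ^{n₁+n₂}` onto `P² = {0} × ℝ^{n₂}`. -/
def projTo2 (n₁ n₂ : ℕ) (x : Euc (n₁ + n₂)) : Euc (n₁ + n₂) := pad2 n₁ n₂ (proj2 n₁ n₂ x)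

/-- `T` is the approximate tangent `d`-plane of `F` at `x`. -/
def IsApproxTangent (d : ℕ) (F : Set (Euc n)) (x : Euc n) (T : Submodule ℝ (Euc n)) : Prop :=
  Module.finrank ℝ T = d ∧
  0 < Filter.limsup (fun r : ℝ => μH[(d:ℝ)] (F ∩ ball x r) / ENNReal.ofReal (r ^ d))
      (nhdsWithin 0 (Ioi 0)) ∧
  ∀ ε : ℝ, 0 < ε →
    Tendsto (fun r : ℝ =>
        μH[(d:ℝ)] ((F ∩ ball x r) ∩ {y | ε * ‖y - x‖ < infDist (y - x) (T : Set (Euc n))}) /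
          ENNReal.ofReal (r ^ d))
      (nhdsWithin 0 (Ioi 0)) (nhds 0)

/-- `F` is `d`-rectifiable. -/
def IsRectifiable (d : ℕ) (F : Set (Euc n)) : Prop :=
  ∃ f : ℕ → (Euc d → Euc n),
    (∀ k, ∃ L : ℝ≥0, LipschitzWith L (f k)) ∧
    μH[(d:ℝ)] (F \ ⋃ k, range (f k)) = 0

/-- Orthogonal projection onto a submodule, as a map of the ambient space. -/
def oproj (P : Submodule ℝ (Euc n)) (v : Euc n) : Euc n :=
  (P.orthogonalProjection v : Euc n)

/-- A nonzero vector `z` has angle `α` between `P¹` and `P²`. -/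
def HasAngleBetween (P₁ P₂ : Submodule ℝ (Euc n)) (α : ℝ) (z : Euc n) : Prop :=
  ‖oproj P₁ z‖ = Real.cos α * ‖z‖ ∧ ‖oproj P₂ z‖ = Real.sin α * ‖z‖

/-- `T` is a `d`-analytic subspace between `P¹` and `P²` with angle `α`. -/
def IsAnalyticSubspace (P₁ P₂ : Submodule ℝ (Euc n)) (α : ℝ) (T : Submodule ℝ (Euc n)) : Prop :=
  ∀ z ∈ T, z ≠ 0 → HasAngleBetween P₁ P₂ α z

/-- The point `(a,b) ∈ ℝ²`. -/
def mk2 (a b : ℝ) : Euc 2 := (EuclideanSpace.equiv (Fin 2) ℝ).symm ![a, b]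

/-- The sector `R_α = {(r,θ) : r₀ ≤ r ≤ 1, 0 ≤ θ ≤ π/α}` (polar coordinates). -/
def sectorR (α : ℕ) (r₀ : ℝ) : Set (Euc 2) :=
  {x | ∃ r θ : ℝ, r₀ ≤ r ∧ r ≤ 1 ∧ 0 ≤ θ ∧ θ ≤ Real.pi / α ∧
    x = mk2 (r * Real.cos θ) (r * Real.sin θ)}

/-- The inner arc `L_α = {(r₀,θ) : 0 ≤ θ ≤ π/α}`. -/
def sectorL (α : ℕ) (r₀ : ℝ) : Set (Euc 2) :=
  {x | ∃ θ : ℝ, 0 ≤ θ ∧ θ ≤ Real.pi / α ∧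
    x = mk2 (r₀ * Real.cos θ) (r₀ * Real.sin θ)}

/-- The outer arc `K_α = {(1,θ) : 0 ≤ θ ≤ π/α}`. -/
def sectorK (α : ℕ) : Set (Euc 2) :=
  {x | ∃ θ : ℝ, 0 ≤ θ ∧ θ ≤ Real.pi / α ∧ x = mk2 (Real.cos θ) (Real.sin θ)}

/-- The annular sector `{(r,θ) : s/4 ≤ r ≤ 2s, 0 ≤ θ ≤ θ₀}`. -/
def annR (θ₀ s : ℝ) : Set (Euc 2) :=
  {x | ∃ r θ : ℝ, s / 4 ≤ r ∧ r ≤ 2 * s ∧ 0 ≤ θ ∧ θ ≤ θ₀ ∧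
    x = mk2 (r * Real.cos θ) (r * Real.sin θ)}

/-- The annular sector `{(r,θ) : s/4 ≤ r ≤ s, 0 ≤ θ ≤ θ₀}`. -/
def annR' (θ₀ s : ℝ) : Set (Euc 2) :=
  {x | ∃ r θ : ℝ, s / 4 ≤ r ∧ r ≤ s ∧ 0 ≤ θ ∧ θ ≤ θ₀ ∧
    x = mk2 (r * Real.cos θ) (r * Real.sin θ)}

/-!
If `|p²x ∧ p²y| = 0`, then `|p¹x ∧ p¹y| = 1`. Since `|a ∧ b| ≤ ‖a‖‖b‖` and `‖p¹x‖, ‖p¹y‖ ≤ 1`,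
this forces `‖p¹x‖ = ‖p¹y‖ = 1`, so `p²x = p²y = 0` by Pythagoras and `span{x,y} ⊆ P¹`.
Once the Gram determinant of `p²x, p²y` is positive, these vectors are linearly independent,
and a linear map sending `x, y` to independent vectors is injective on their span.
-/

lemma LinearMap.injOn_span_pair_of_linearIndependent {R M M' : Type*} [Ring R] [AddCommGroup M]
    [Module R M] [AddCommGroup M'] [Module R M'] {f : M →ₗ[R] M'} {x y : M}
    (h : LinearIndependent R ![f x, f y]) : InjOn f (Submodule.span R {x, y}) := by
  have hfv : f ∘ ![x, y] = ![f x, f y] := (FinVec.map_eq _ _).symm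
  have := Submodule.range_ker_disjoint (hfv ▸ h)
  rwa [Matrix.range_cons_cons_empty, LinearMap.disjoint_ker_iff_injOn] at this

section Wedge

lemma wedgeNorm_nonneg {d : ℕ} (v : Fin d → Euc n) : 0 ≤ wedgeNorm v := Real.sqrt_nonneg _

lemma linearIndependent_of_wedgeNorm_pos {d : ℕ} {v : Fin d → Euc n} (h : 0 < wedgeNorm v) :
    LinearIndependent ℝ v :=
  Matrix.linearIndependent_of_det_gram_ne_zero (Real.sqrt_pos.mp h).ne'

lemma wedgeNorm_pair (a b : Euc n) :
    wedgeNorm ![a, b] = √(‖a‖ ^ 2 * ‖b‖ ^ 2 - ⟪a, b⟫ ^ 2) := by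
  rw [wedgeNorm, Matrix.det_fin_two]
  simp only [Matrix.of_apply, Matrix.cons_val_zero, Matrix.cons_val_one, real_inner_self_eq_norm_sq,
    real_inner_comm a b]
  ring_nf

lemma wedgeNorm_pair_le (a b : Euc n) : wedgeNorm ![a, b] ≤ ‖a‖ * ‖b‖ := by
  rw [wedgeNorm_pair, ← Real.sqrt_sq (by positivity : 0 ≤ ‖a‖ * ‖b‖)]
  exact Real.sqrt_le_sqrt (by nlinarith [sq_nonneg ⟪a, b⟫])

lemma norm_eq_one_of_wedgeNorm_pair_eq_one {a b : Euc n} (ha : ‖a‖ ≤ 1) (hb : ‖b‖ ≤ 1)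
    (h : wedgeNorm ![a, b] = 1) : ‖a‖ = 1 ∧ ‖b‖ = 1 := by
  have hab : 1 ≤ ‖a‖ * ‖b‖ := h ▸ wedgeNorm_pair_le a b
  constructor <;> nlinarith [norm_nonneg a, norm_nonneg b]

end Wedge

section Projections

variable {n₁ n₂ : ℕ}

lemma projTo1_apply (u : Euc (n₁ + n₂)) (i : Fin (n₁ + n₂)) :
    projTo1 n₁ n₂ u i = if (i : ℕ) < n₁ then u i else 0 := by
  show (if h : (i : ℕ) < n₁ then u (Fin.castAdd n₂ ⟨i, h⟩) else 0) = _
  split_ifs <;> rfl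

lemma projTo2_apply (u : Euc (n₁ + n₂)) (i : Fin (n₁ + n₂)) :
    projTo2 n₁ n₂ u i = if (i : ℕ) < n₁ then 0 else u i := by
  show (if h : (i : ℕ) < n₁ then 0 else u (Fin.natAdd n₁ ⟨(i : ℕ) - n₁, by omega⟩)) = _
  split_ifs with h
  · rfl
  · exact congrArg (fun j => u j) (Fin.ext (by simp only [Fin.val_natAdd]; omega))

lemma projTo1_add_projTo2 (u : Euc (n₁ + n₂)) : projTo1 n₁ n₂ u + projTo2 n₁ n₂ u = u := by
  ext i
  simp only [PiLp.add_apply, projTo1_apply, projTo2_apply]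
  split_ifs <;> simp

lemma inner_projTo1_add_inner_projTo2 (u v : Euc (n₁ + n₂)) :
    ⟪projTo1 n₁ n₂ u, projTo1 n₁ n₂ v⟫ + ⟪projTo2 n₁ n₂ u, projTo2 n₁ n₂ v⟫ = ⟪u, v⟫ := by
  simp only [PiLp.inner_apply, RCLike.inner_apply, conj_trivial, projTo1_apply, projTo2_apply,
    ← Finset.sum_add_distrib]
  congr 1 with i
  split_ifs <;> ring

lemma norm_projTo1_sq_add_norm_projTo2_sq (u : Euc (n₁ + n₂)) :
    ‖projTo1 n₁ n₂ u‖ ^ 2 + ‖projTo2 n₁ n₂ u‖ ^ 2 = ‖u‖ ^ 2 := by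
  simpa only [real_inner_self_eq_norm_sq] using inner_projTo1_add_inner_projTo2 u u

lemma norm_projTo1_le (u : Euc (n₁ + n₂)) : ‖projTo1 n₁ n₂ u‖ ≤ ‖u‖ := by
  nlinarith [norm_projTo1_sq_add_norm_projTo2_sq u, norm_nonneg u, norm_nonneg (projTo1 n₁ n₂ u),
    sq_nonneg ‖projTo2 n₁ n₂ u‖]

lemma projTo2_eq_zero_of_norm_le_norm_projTo1 {u : Euc (n₁ + n₂)}
    (h : ‖u‖ ≤ ‖projTo1 n₁ n₂ u‖) : projTo2 n₁ n₂ u = 0 := by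
  have := pow_le_pow_left₀ (norm_nonneg u) h 2
  rw [← norm_eq_zero, ← sq_eq_zero_iff]
  nlinarith [norm_projTo1_sq_add_norm_projTo2_sq u, sq_nonneg ‖projTo2 n₁ n₂ u‖]

variable (n₁ n₂) in
def projTo2ₗ : Euc (n₁ + n₂) →ₗ[ℝ] Euc (n₁ + n₂) where
  toFun := projTo2 n₁ n₂
  map_add' u v := by
    ext i
    simp only [PiLp.add_apply, projTo2_apply]
    split_ifs <;> simp
  map_smul' c u := by
    ext i
    simp only [PiLp.smul_apply, projTo2_apply, RingHom.id_apply]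
    split_ifs <;> simp

lemma span_subset_range_pad1 {s : Set (Euc (n₁ + n₂))} (h : ∀ u ∈ s, projTo2 n₁ n₂ u = 0) :
    (Submodule.span ℝ s : Set (Euc (n₁ + n₂))) ⊆ range (pad1 n₁ n₂) := by
  intro u hu
  have hu2 : projTo2 n₁ n₂ u = 0 :=
    (Submodule.span_le (p := LinearMap.ker (projTo2ₗ n₁ n₂))).mpr h hu
  have hu1 := projTo1_add_projTo2 u
  rw [hu2, add_zero] at hu1
  exact ⟨proj1 n₁ n₂ u, hu1⟩

lemma projTo2_eq_zero_of_wedgeNorm_projTo1_eq_one {x y : Euc (n₁ + n₂)} (hx : ‖x‖ ≤ 1)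
    (hy : ‖y‖ ≤ 1) (h : wedgeNorm ![projTo1 n₁ n₂ x, projTo1 n₁ n₂ y] = 1) :
    projTo2 n₁ n₂ x = 0 ∧ projTo2 n₁ n₂ y = 0 := by
  obtain ⟨hx1, hy1⟩ := norm_eq_one_of_wedgeNorm_pair_eq_one
    ((norm_projTo1_le x).trans hx) ((norm_projTo1_le y).trans hy) h
  exact ⟨projTo2_eq_zero_of_norm_le_norm_projTo1 (hx1 ▸ hx),
    projTo2_eq_zero_of_norm_le_norm_projTo1 (hy1 ▸ hy)⟩

end Projections

theorem second_projection_nondegenerate_general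
    (n₁ n₂ : ℕ)
    (x y : Euc (n₁ + n₂)) (hx : ‖x‖ = 1) (hy : ‖y‖ = 1)
    (hsum : wedgeNorm ![projTo1 n₁ n₂ x, projTo1 n₁ n₂ y] +
      wedgeNorm ![projTo2 n₁ n₂ x, projTo2 n₁ n₂ y] = 1)
    (hnot : ¬ (Submodule.span ℝ {x, y} : Set (Euc (n₁ + n₂))) ⊆ range (pad1 n₁ n₂)) :
    0 < wedgeNorm ![projTo2 n₁ n₂ x, projTo2 n₁ n₂ y] ∧
    InjOn (projTo2 n₁ n₂) (Submodule.span ℝ {x, y} : Set (Euc (n₁ + n₂))) := by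
  have hpos : 0 < wedgeNorm ![projTo2 n₁ n₂ x, projTo2 n₁ n₂ y] := by
    refine (wedgeNorm_nonneg _).lt_of_ne' fun h0 => hnot (span_subset_range_pad1 ?_)
    rw [h0, add_zero] at hsum
    obtain ⟨hx2, hy2⟩ := projTo2_eq_zero_of_wedgeNorm_projTo1_eq_one hx.le hy.le hsum
    simp [hx2, hy2]
  exact ⟨hpos, LinearMap.injOn_span_pair_of_linearIndependent (f := projTo2ₗ n₁ n₂)
    (linearIndependent_of_wedgeNorm_pos hpos)⟩

/-- **Nondegeneracy of the second projection.** For unit vectors `x, y ∈ ℝ^{n₁+n₂}` with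
`|x∧y| = 1` and `|p¹x∧p¹y| + |p²x∧p²y| = 1`, if `span{x,y}` is not contained in
`P¹ = ℝ^{n₁}×{0}`, then `|p²x∧p²y| > 0`; in other words `p²` is injective on `span{x,y}`. -/
theorem second_projection_nondegenerate
    (n₁ n₂ : ℕ) (h₁ : 2 ≤ n₁) (h₂ : 2 ≤ n₂)
    (x y : Euc (n₁ + n₂)) (hx : ‖x‖ = 1) (hy : ‖y‖ = 1)
    (hxy : wedgeNorm ![x, y] = 1)
    (hsum : wedgeNorm ![projTo1 n₁ n₂ x, projTo1 n₁ n₂ y] +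
      wedgeNorm ![projTo2 n₁ n₂ x, projTo2 n₁ n₂ y] = 1)
    (hnot : ¬ (Submodule.span ℝ {x, y} : Set (Euc (n₁ + n₂))) ⊆ range (pad1 n₁ n₂)) :
    0 < wedgeNorm ![projTo2 n₁ n₂ x, projTo2 n₁ n₂ y] ∧
    InjOn (projTo2 n₁ n₂) (Submodule.span ℝ {x, y} : Set (Euc (n₁ + n₂))) :=
  second_projection_nondegenerate_general n₁ n₂ x y hx hy hsum hnot

end
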